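/- Fix a monomial order ⪯ on ℕ^d, a finitely generated cone C, m ∈ C \ {0}, and assume {x ∈ C : x ≺ f} is finite for all f ∈ C. Then S_m = {x ∈ C : x ⪰ m} ∪ {0} is a C-semigroup with multiplicity m, and every C-semigroup with multiplicity m is contained in C and contains no nonzero element ≺ m; in particular S_m is the unique maximal (under inclusion) C-semigroup of multiplicity m. -/

import Mathlib

/-- A monomial order on `ℕ^d`: a total order compatible with addition,
with `0` as least element. -/
def IsMonomialOrder (d : ℕ) (le : (Fin d → ℕ) → (Fin d → ℕ) → Prop) : Prop :=
  (∀ a, le a a) ∧ (∀ a b, le a b → le b a → a = b) ∧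
  (∀ a b c, le a b → le b c → le a c) ∧ (∀ a b, le a b ∨ le b a) ∧
  (∀ a b c, le a b → le (a + c) (b + c)) ∧ (∀ a, le 0 a)

/-- `S` is a `C`-semigroup: a submonoid of the cone `C` with finite complement in `C`. -/
def IsCSgp {d : ℕ} (C : AddSubmonoid (Fin d → ℕ)) (S : Set (Fin d → ℕ)) : Prop :=
  0 ∈ S ∧ (∀ x ∈ S, ∀ y ∈ S, x + y ∈ S) ∧ S ⊆ (C : Set (Fin d → ℕ)) ∧
    ((C : Set (Fin d → ℕ)) \ S).Finite

/-- `S` is a `P`-semigroup: for every nonzero `s ∈ S` there is `p ∈ P` with `s + p ∈ S`. -/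
def IsPSgp {d : ℕ} (P : Set (Fin d → ℕ)) (S : Set (Fin d → ℕ)) : Prop :=
  ∀ s ∈ S, s ≠ 0 → ∃ p ∈ P, s + p ∈ S

/-- `a` is a minimal generator of `S`. -/
def IsMinGen {d : ℕ} (S : Set (Fin d → ℕ)) (a : Fin d → ℕ) : Prop :=
  a ∈ S ∧ a ≠ 0 ∧ ¬ ∃ x ∈ S, ∃ y ∈ S, x ≠ 0 ∧ y ≠ 0 ∧ a = x + y


/-! Since `0` is least and the order is compatible with addition, `x ⪯ x + y`, so the elements
of `C` above `m` are closed under addition. By totality, an element of `C` outside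
`S_m = upperSgp C le m` lies strictly below `m`, and there are only finitely many of those. -/

namespace IsMonomialOrder

variable {d : ℕ} {le : (Fin d → ℕ) → (Fin d → ℕ) → Prop}

theorem le_add_right (hle : IsMonomialOrder d le) (x y : Fin d → ℕ) : le x (x + y) := by
  obtain ⟨-, -, -, -, hadd, hzero⟩ := hle
  simpa [add_comm] using hadd 0 y x (hzero y)

end IsMonomialOrder

section UpperSgp

variable {d : ℕ} (C : AddSubmonoid (Fin d → ℕ)) (le : (Fin d → ℕ) → (Fin d → ℕ) → Prop)
  (m : Fin d → ℕ)

def upperSgp : Set (Fin d → ℕ) :=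
  {x ∈ (C : Set (Fin d → ℕ)) | le m x} ∪ {0}

variable {C le m}

theorem add_mem_upperSgp (hle : IsMonomialOrder d le) {x y : Fin d → ℕ}
    (hx : x ∈ upperSgp C le m) (hy : y ∈ upperSgp C le m) : x + y ∈ upperSgp C le m := by
  have hxy := hle.le_add_right x y
  obtain ⟨-, -, htrans, -⟩ := hle
  rcases hx with ⟨hxC, hmx⟩ | rfl
  · rcases hy with ⟨hyC, -⟩ | rfl
    · exact Or.inl ⟨C.add_mem hxC hyC, htrans _ _ _ hmx hxy⟩
    · rw [add_zero]; exact Or.inl ⟨hxC, hmx⟩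
  · rwa [zero_add]

theorem upperSgp_subset : upperSgp C le m ⊆ C := by
  rintro x (⟨hxC, -⟩ | rfl)
  exacts [hxC, C.zero_mem]

theorem diff_upperSgp_subset (hle : IsMonomialOrder d le) :
    (C : Set (Fin d → ℕ)) \ upperSgp C le m ⊆ {x ∈ (C : Set (Fin d → ℕ)) | le x m ∧ x ≠ m} := by
  obtain ⟨hrefl, -, -, htot, -⟩ := hle
  rintro x ⟨hxC, hx⟩
  have hmx : ¬ le m x := fun h => hx (Or.inl ⟨hxC, h⟩)
  exact ⟨hxC, (htot m x).resolve_left hmx, by rintro rfl; exact hmx (hrefl x)⟩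

theorem isCSgp_upperSgp (hle : IsMonomialOrder d le)
    (hlow : {x ∈ (C : Set (Fin d → ℕ)) | le x m ∧ x ≠ m}.Finite) :
    IsCSgp C (upperSgp C le m) :=
  ⟨Or.inr rfl, fun _ hx _ hy => add_mem_upperSgp hle hx hy, upperSgp_subset,
    hlow.subset (diff_upperSgp_subset hle)⟩

theorem self_mem_upperSgp (hle : IsMonomialOrder d le) (hmC : m ∈ C) : m ∈ upperSgp C le m :=
  Or.inl ⟨hmC, hle.1 m⟩

theorem le_of_mem_upperSgp {s : Fin d → ℕ} (hs : s ∈ upperSgp C le m) (hs0 : s ≠ 0) : le m s :=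
  match hs with
  | Or.inl ⟨_, hms⟩ => hms
  | Or.inr h => absurd h hs0

theorem subset_upperSgp {T : Set (Fin d → ℕ)} (hTC : T ⊆ C)
    (hTm : ∀ s ∈ T, s ≠ 0 → le m s) : T ⊆ upperSgp C le m := fun s hs =>
  if hs0 : s = 0 then Or.inr hs0 else Or.inl ⟨hTC hs, hTm s hs hs0⟩

end UpperSgp

theorem stmt_18_general {d : ℕ} (C : AddSubmonoid (Fin d → ℕ))
    (le : (Fin d → ℕ) → (Fin d → ℕ) → Prop) (hle : IsMonomialOrder d le)
    (hlow : ∀ f ∈ (C : Set (Fin d → ℕ)),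
      {x ∈ (C : Set (Fin d → ℕ)) | le x f ∧ x ≠ f}.Finite)
    (m : Fin d → ℕ) (hmC : m ∈ (C : Set (Fin d → ℕ))) :
    IsCSgp C ({x ∈ (C : Set (Fin d → ℕ)) | le m x} ∪ {0}) ∧
      (m ∈ ({x ∈ (C : Set (Fin d → ℕ)) | le m x} ∪ {0}) ∧
        ∀ s ∈ ({x ∈ (C : Set (Fin d → ℕ)) | le m x} ∪ {0}), s ≠ 0 → le m s) ∧
      ∀ T : Set (Fin d → ℕ), IsCSgp C T →
        (m ∈ T ∧ ∀ s ∈ T, s ≠ 0 → le m s) →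
        T ⊆ ({x ∈ (C : Set (Fin d → ℕ)) | le m x} ∪ {0}) :=
  ⟨isCSgp_upperSgp hle (hlow m hmC),
    ⟨self_mem_upperSgp hle hmC, fun _ hs hs0 => le_of_mem_upperSgp hs hs0⟩,
    fun _ ⟨_, _, hTC, _⟩ ⟨_, hTm⟩ => subset_upperSgp hTC hTm⟩

theorem stmt_18 {d : ℕ} (C : AddSubmonoid (Fin d → ℕ)) (hCfg : C.FG)
    (le : (Fin d → ℕ) → (Fin d → ℕ) → Prop) (hle : IsMonomialOrder d le)
    (hlow : ∀ f ∈ (C : Set (Fin d → ℕ)),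
      {x ∈ (C : Set (Fin d → ℕ)) | le x f ∧ x ≠ f}.Finite)
    (m : Fin d → ℕ) (hmC : m ∈ (C : Set (Fin d → ℕ))) (hm0 : m ≠ 0) :
    IsCSgp C ({x ∈ (C : Set (Fin d → ℕ)) | le m x} ∪ {0}) ∧
      (m ∈ ({x ∈ (C : Set (Fin d → ℕ)) | le m x} ∪ {0}) ∧
        ∀ s ∈ ({x ∈ (C : Set (Fin d → ℕ)) | le m x} ∪ {0}), s ≠ 0 → le m s) ∧
      ∀ T : Set (Fin d → ℕ), IsCSgp C T →
        (m ∈ T ∧ ∀ s ∈ T, s ≠ 0 → le m s) →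
        T ⊆ ({x ∈ (C : Set (Fin d → ℕ)) | le m x} ∪ {0}) :=
  stmt_18_general C le hle hlow m hmC
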